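/- arXiv:1906.09507 — 2 statements merged into one kernel-verified Lean document; each statement's English description precedes it below -/
import Mathlib

section
/- Let X = (X_t)_{t∈ℝ} be a stochastic process with values in a standard Borel space (𝒳, Σ) that is locally exchangeable with respect to a premetric d on ℝ, and suppose there exist constants C ≥ 0, δ > 0, and γ > 0 such that d(t, t') ≤ C|t − t'|^{1+γ} whenever |t − t'| ≤ δ. Then X is stationary: for every finite subset T ⊆ ℝ and every Δ ∈ ℝ, the law of (X_t)_{t∈T} equals the law of (X_{t+Δ})_{t∈T} as probability measures on 𝒳^T. -/
open MeasureTheory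

noncomputable def tvDist {𝒴 : Type*} [MeasurableSpace 𝒴] (μ ν : Measure 𝒴) : ℝ :=
  ⨆ A : {A : Set 𝒴 // MeasurableSet A}, |(μ A.1).toReal - (ν A.1).toReal|

section aux
variable {𝒴 𝒵 : Type*} [MeasurableSpace 𝒴] [MeasurableSpace 𝒵]

lemma tvDist_bdd (μ ν : Measure 𝒴) [IsProbabilityMeasure μ] [IsProbabilityMeasure ν] :
    BddAbove (Set.range fun A : {A : Set 𝒴 // MeasurableSet A} =>
      |(μ A.1).toReal - (ν A.1).toReal|) := by
  refine ⟨1, ?_⟩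
  rintro x ⟨B, rfl⟩
  have h1 : (μ B.1).toReal ≤ 1 := by
    simpa using ENNReal.toReal_mono ENNReal.one_ne_top (prob_le_one (μ := μ) (s := B.1))
  have h2 : (ν B.1).toReal ≤ 1 := by
    simpa using ENNReal.toReal_mono ENNReal.one_ne_top (prob_le_one (μ := ν) (s := B.1))
  have h3 : 0 ≤ (μ B.1).toReal := ENNReal.toReal_nonneg
  have h4 : 0 ≤ (ν B.1).toReal := ENNReal.toReal_nonneg
  exact abs_sub_le_iff.mpr ⟨by linarith, by linarith⟩

lemma abs_le_tvDist (μ ν : Measure 𝒴) [IsProbabilityMeasure μ] [IsProbabilityMeasure ν]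
    {A : Set 𝒴} (hA : MeasurableSet A) :
    |(μ A).toReal - (ν A).toReal| ≤ tvDist μ ν :=
  le_ciSup (tvDist_bdd μ ν) ⟨A, hA⟩

lemma tvDist_nonneg (μ ν : Measure 𝒴) [IsProbabilityMeasure μ] [IsProbabilityMeasure ν] :
    0 ≤ tvDist μ ν :=
  le_trans (abs_nonneg _) (abs_le_tvDist μ ν MeasurableSet.empty)

lemma tvDist_triangle (μ ν ρ : Measure 𝒴) [IsProbabilityMeasure μ]
    [IsProbabilityMeasure ν] [IsProbabilityMeasure ρ] :
    tvDist μ ρ ≤ tvDist μ ν + tvDist ν ρ := by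
  refine Real.iSup_le (fun A => ?_) (add_nonneg (tvDist_nonneg μ ν) (tvDist_nonneg ν ρ))
  calc |(μ A.1).toReal - (ρ A.1).toReal|
      ≤ |(μ A.1).toReal - (ν A.1).toReal| + |(ν A.1).toReal - (ρ A.1).toReal| :=
        abs_sub_le _ _ _
    _ ≤ tvDist μ ν + tvDist ν ρ :=
        add_le_add (abs_le_tvDist μ ν A.2) (abs_le_tvDist ν ρ A.2)

lemma tvDist_map_le (f : 𝒴 → 𝒵) (hf : Measurable f) (μ ν : Measure 𝒴)
    [IsProbabilityMeasure μ] [IsProbabilityMeasure ν] :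
    tvDist (Measure.map f μ) (Measure.map f ν) ≤ tvDist μ ν := by
  refine Real.iSup_le (fun A => ?_) (tvDist_nonneg μ ν)
  rw [Measure.map_apply hf A.2, Measure.map_apply hf A.2]
  exact abs_le_tvDist μ ν (hf A.2)

end aux

/-- a locally exchangeable process `X = (X_t)_{t∈ℝ}` whose premetric
satisfies `d(t,t') ≤ C|t−t'|^{1+γ}` for `|t−t'| ≤ δ` with `γ > 0` is stationary:
for every finite `T ⊆ ℝ` and shift `Δ ∈ ℝ`, the laws of `(X_t)_{t∈T}` and
`(X_{t+Δ})_{t∈T}` coincide. -/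
theorem stmt5
    {Ω 𝒳 : Type*} [MeasurableSpace Ω] [MeasurableSpace 𝒳] [StandardBorelSpace 𝒳]
    (ℙ : Measure Ω) [IsProbabilityMeasure ℙ]
    (X : ℝ → Ω → 𝒳) (hX : ∀ t, Measurable (X t))
    (d : ℝ → ℝ → ℝ)
    (hd0 : ∀ t t', 0 ≤ d t t') (hd1 : ∀ t t', d t t' ≤ 1)
    (hdsymm : ∀ t t', d t t' = d t' t) (hdrefl : ∀ t, d t t = 0)
    (hexch : ∀ (T : Finset ℝ) (π : ℝ → ℝ), Set.InjOn π ↑T →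
      tvDist (Measure.map (fun ω => fun t : T => X t.1 ω) ℙ)
             (Measure.map (fun ω => fun t : T => X (π t.1) ω) ℙ)
        ≤ ∑ t ∈ T, d t (π t))
    (C δ γ : ℝ) (hC : 0 ≤ C) (hδ : 0 < δ) (hγ : 0 < γ)
    (hdbd : ∀ t t' : ℝ, |t - t'| ≤ δ → d t t' ≤ C * |t - t'| ^ (1 + γ)) :
    ∀ (T : Finset ℝ) (Δ : ℝ),
      Measure.map (fun ω => fun t : T => X t.1 ω) ℙ
        = Measure.map (fun ω => fun t : T => X (t.1 + Δ) ω) ℙ := by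
  intro T Δ
  -- the law of the shifted process
  set L : ℝ → Measure (T → 𝒳) :=
    fun a => Measure.map (fun ω => fun t : T => X (t.1 + a) ω) ℙ with hL
  have hLm : ∀ a : ℝ, Measurable (fun ω => fun t : T => X (t.1 + a) ω) :=
    fun a => measurable_pi_lambda _ fun t => hX _
  haveI hLP : ∀ a : ℝ, IsProbabilityMeasure (L a) :=
    fun a => Measure.isProbabilityMeasure_map (hLm a).aemeasurable
  -- one small step
  have key : ∀ a h : ℝ, |h| ≤ δ →
      tvDist (L a) (L (a + h)) ≤ ∑ t ∈ T, d (t + a) (t + a + h) := by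
    intro a h hh
    set T' : Finset ℝ := T.image (· + a) with hT'
    have hmem : ∀ t : T, (t.1 + a) ∈ T' := fun t =>
      Finset.mem_image.mpr ⟨t.1, t.2, rfl⟩
    set g : (T' → 𝒳) → (T → 𝒳) := fun x t => x ⟨t.1 + a, hmem t⟩ with hg
    have hgm : Measurable g := measurable_pi_lambda _ fun t => measurable_pi_apply _
    have hF0 : Measurable (fun ω => fun s : T' => X s.1 ω) :=
      measurable_pi_lambda _ fun s => hX _
    have hF1 : Measurable (fun ω => fun s : T' => X (s.1 + h) ω) :=
      measurable_pi_lambda _ fun s => hX _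
    haveI := Measure.isProbabilityMeasure_map (μ := ℙ) hF0.aemeasurable
    haveI := Measure.isProbabilityMeasure_map (μ := ℙ) hF1.aemeasurable
    have e0 : L a = Measure.map g (Measure.map (fun ω => fun s : T' => X s.1 ω) ℙ) := by
      rw [Measure.map_map hgm hF0]; rfl
    have e1 : L (a + h) =
        Measure.map g (Measure.map (fun ω => fun s : T' => X (s.1 + h) ω) ℙ) := by
      rw [Measure.map_map hgm hF1]
      have hfun : (g ∘ fun ω (s : T') => X (s.1 + h) ω)
          = fun ω => fun t : T => X (t.1 + (a + h)) ω := by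
        funext ω t
        show X (t.1 + a + h) ω = X (t.1 + (a + h)) ω
        rw [add_assoc]
      rw [hfun]
    have hπ : Set.InjOn (· + h) ↑T' := fun x _ y _ hxy => by
      simpa using hxy
    have hsum : ∑ s ∈ T', d s (s + h) = ∑ t ∈ T, d (t + a) (t + a + h) := by
      rw [hT', Finset.sum_image (fun x _ y _ hxy => by simpa using hxy)]
    calc tvDist (L a) (L (a + h))
        ≤ tvDist (Measure.map (fun ω => fun s : T' => X s.1 ω) ℙ)
            (Measure.map (fun ω => fun s : T' => X (s.1 + h) ω) ℙ) := by
          rw [e0, e1]; exact tvDist_map_le g hgm _ _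
      _ ≤ ∑ s ∈ T', d s (s + h) := hexch T' (· + h) hπ
      _ = _ := hsum
  -- bound for each step length
  have step : ∀ a h : ℝ, |h| ≤ δ →
      tvDist (L a) (L (a + h)) ≤ T.card * (C * |h| ^ (1 + γ)) := by
    intro a h hh
    refine le_trans (key a h hh) ?_
    rw [Finset.card_eq_sum_ones T, Nat.cast_sum, Finset.sum_mul]
    refine Finset.sum_le_sum fun t _ => ?_
    have : |(t + a) - (t + a + h)| = |h| := by
      rw [show (t + a) - (t + a + h) = -h by ring, abs_neg]
    have := hdbd (t + a) (t + a + h) (by rw [this]; exact hh)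
    rw [show |(t + a) - (t + a + h)| = |h| by
      rw [show (t + a) - (t + a + h) = -h by ring, abs_neg]] at this
    simpa using this
  -- telescoping
  have tele : ∀ (h : ℝ), |h| ≤ δ → ∀ k : ℕ,
      tvDist (L 0) (L (k * h)) ≤ k * (T.card * (C * |h| ^ (1 + γ))) := by
    intro h hh
    intro k
    induction k with
    | zero =>
      simp only [Nat.cast_zero, zero_mul]
      have : L ((0 : ℝ)) = L 0 := rfl
      -- tvDist (L 0) (L 0) ≤ 0
      refine Real.iSup_le (fun A => ?_) le_rfl
      simp
    | succ n ih =>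
      have h1 : tvDist (L 0) (L ((n + 1 : ℕ) * h)) ≤
          tvDist (L 0) (L (n * h)) + tvDist (L (n * h)) (L ((n + 1 : ℕ) * h)) := by
        exact tvDist_triangle _ _ _
      have h2 : tvDist (L (n * h)) (L ((n + 1 : ℕ) * h)) ≤
          T.card * (C * |h| ^ (1 + γ)) := by
        have := step (n * h) h hh
        rw [show (n : ℝ) * h + h = ((n + 1 : ℕ) : ℝ) * h by push_cast; ring] at this
        exact this
      calc tvDist (L 0) (L ((n + 1 : ℕ) * h)) ≤ _ := h1
        _ ≤ n * (T.card * (C * |h| ^ (1 + γ))) + T.card * (C * |h| ^ (1 + γ)) :=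
          add_le_add ih h2
        _ = ((n + 1 : ℕ) : ℝ) * (T.card * (C * |h| ^ (1 + γ))) := by push_cast; ring
  -- the bound for n steps of size Δ/n
  have bound : ∀ n : ℕ, 1 ≤ n → |Δ| / n ≤ δ →
      tvDist (L 0) (L Δ) ≤ n * (T.card * (C * (|Δ| / n) ^ (1 + γ))) := by
    intro n hn hsmall
    have hn0 : (0 : ℝ) < n := by exact_mod_cast hn
    have habs : |Δ / n| = |Δ| / n := by
      rw [abs_div, abs_of_pos hn0]
    have := tele (Δ / n) (by rw [habs]; exact hsmall) n
    rw [habs] at this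
    rw [show (n : ℝ) * (Δ / n) = Δ by field_simp] at this
    exact this
  -- tvDist (L 0) (L Δ) = 0
  have hzero : tvDist (L 0) (L Δ) = 0 := by
    have hnn := tvDist_nonneg (L 0) (L Δ)
    refine le_antisymm ?_ hnn
    set K : ℝ := T.card * (C * |Δ| ^ (1 + γ)) with hK
    have hconv : Filter.Tendsto (fun n : ℕ => K * (n : ℝ) ^ (-γ))
        Filter.atTop (nhds 0) := by
      have := (tendsto_rpow_neg_atTop hγ).comp (tendsto_natCast_atTop_atTop (R := ℝ))
      simpa using this.const_mul K
    refine ge_of_tendsto hconv ?_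
    have hev1 : ∀ᶠ n : ℕ in Filter.atTop, 1 ≤ n := Filter.eventually_ge_atTop 1
    have hev2 : ∀ᶠ n : ℕ in Filter.atTop, |Δ| / δ ≤ n := by
      obtain ⟨N, hN⟩ := exists_nat_ge (|Δ| / δ)
      exact Filter.eventually_atTop.mpr ⟨N, fun n hn => hN.trans (by exact_mod_cast hn)⟩
    filter_upwards [hev1, hev2] with n hn1 hn2
    have hn0 : (0 : ℝ) < n := by exact_mod_cast hn1
    have hsmall : |Δ| / n ≤ δ := by
      rw [div_le_iff₀ hn0]
      calc |Δ| = δ * (|Δ| / δ) := by field_simp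
        _ ≤ δ * n := by nlinarith [hδ.le, abs_nonneg Δ]
    have hb := bound n hn1 hsmall
    have hne : (n : ℝ) ≠ 0 := hn0.ne'
    have hng : (0 : ℝ) < (n : ℝ) ^ γ := Real.rpow_pos_of_pos hn0 γ
    have h1 : (|Δ| / (n : ℝ)) ^ (1 + γ) = |Δ| ^ (1 + γ) / (n : ℝ) ^ (1 + γ) :=
      Real.div_rpow (abs_nonneg Δ) hn0.le (1 + γ)
    have h2 : (n : ℝ) ^ (1 + γ) = (n : ℝ) * (n : ℝ) ^ γ := by
      rw [Real.rpow_add hn0, Real.rpow_one]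
    have h3 : (n : ℝ) ^ (-γ) = ((n : ℝ) ^ γ)⁻¹ := Real.rpow_neg hn0.le γ
    have heq : (n : ℝ) * (T.card * (C * (|Δ| / n) ^ (1 + γ))) = K * (n : ℝ) ^ (-γ) := by
      rw [h1, h2, h3, hK]
      field_simp
    rw [heq] at hb
    exact hb
  -- conclude equality of measures
  have heq0 : (fun ω => fun t : T => X t.1 ω) = fun ω => fun t : T => X (t.1 + 0) ω := by
    funext ω t; rw [add_zero]
  rw [heq0]
  show L 0 = L Δ
  ext A hA
  have habs := abs_le_tvDist (L 0) (L Δ) hA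
  rw [hzero] at habs
  have := abs_nonpos_iff.mp habs
  have hfin0 : L 0 A ≠ ⊤ := measure_ne_top _ _
  have hfinΔ : L Δ A ≠ ⊤ := measure_ne_top _ _
  exact (ENNReal.toReal_eq_toReal_iff' hfin0 hfinΔ).mp (by linarith [sub_eq_zero.mp this])
end

section
/- Let X be a real random variable taking values in [a, b] (a ≤ b), and U, V random elements of a common measurable space, all defined on a common probability space. If the total variation distance between the law of (X, U) and the law of (X, V) is at most ε, then for every 1-Lipschitz function h : ℝ → ℝ, | E[ h(E[X | σ(U)]) ] − E[ h(E[X | σ(V)]) ] | ≤ 3 (b − a) ε. -/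
/-!
Write `μ` and `ν` for the laws of `(X, U)` and `(X, V)` on `ℝ × 𝒴`. By Doob–Dynkin,
`E[X | σ(U)] = φ ∘ U` and `E[X | σ(V)] = ψ ∘ V` for measurable `φ, ψ : 𝒴 → [a, b]`; in terms of
the joint laws, `φ` is the regression function of the first coordinate on the second under `μ`,
and `ψ` the one under `ν`. The difference of the two expectations then splits as
`(∫ h ∘ φ dμ - ∫ h ∘ φ dν) + (∫ h ∘ φ dν - ∫ h ∘ ψ dν)`.
The first term is the integral against `μ - ν` of a function with range of length `b - a`,
hence at most `(b - a) ε` by the layer-cake formula. The second is at most `∫ |φ - ψ| dν`. With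
`s = ±1` the sign of `φ - ψ` (a function of the second coordinate), the regression property of
`ψ` under `ν` gives `∫ |φ - ψ| dν = ∫ s (φ - x) dν`, and that of `φ` under `μ` gives
`∫ s (φ - x) dμ = 0`; so `∫ |φ - ψ| dν` is the integral against `ν - μ` of a function with
range in `[a - b, b - a]`, at most `2 (b - a) ε`.
-/

open MeasureTheory

open Set

section TotalVariation

variable {α : Type*} [MeasurableSpace α] {μ ν : Measure α} [IsProbabilityMeasure μ]
  [IsProbabilityMeasure ν]

lemma abs_measureReal_sub_le_tvDist {A : Set α} (hA : MeasurableSet A) :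
    |μ.real A - ν.real A| ≤ tvDist μ ν := by
  refine le_ciSup (f := fun A : {A : Set α // MeasurableSet A} => |μ.real A.1 - ν.real A.1|)
    ⟨1, ?_⟩ ⟨A, hA⟩
  rintro _ ⟨B, rfl⟩
  exact abs_sub_le_of_nonneg_of_le measureReal_nonneg measureReal_le_one measureReal_nonneg
    measureReal_le_one

lemma integral_eq_setIntegral_measureReal_add {κ : Measure α} [IsProbabilityMeasure κ]
    {g : α → ℝ} (hg : Measurable g) {c d : ℝ} (hκ : ∀ᵐ x ∂κ, g x ∈ Icc c d) :
    ∫ x, g x ∂κ = (∫ t in Ioc 0 (d - c), κ.real {x | t ≤ g x - c}) + c := by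
  have hint : Integrable g κ := .of_mem_Icc c d hg.aemeasurable hκ
  rw [← (hint.sub (integrable_const c) :).integral_eq_integral_Ioc_meas_le (f := fun x => g x - c)
    (hκ.mono fun x hx => sub_nonneg.2 hx.1) (hκ.mono fun x hx => sub_le_sub_right hx.2 c),
    integral_sub hint (integrable_const c)]
  simp

lemma integrableOn_measureReal_le (κ : Measure α) [IsFiniteMeasure κ] (g : α → ℝ) (s t : ℝ) :
    IntegrableOn (fun r => κ.real {x | r ≤ g x}) (Ioc s t) := by
  have hanti : Antitone fun r => κ.real {x | r ≤ g x} := fun r r' hr =>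
    measureReal_mono fun x hx => hr.trans hx
  exact (hanti.antitoneOn _).integrableOn_isCompact isCompact_Icc |>.mono_set Ioc_subset_Icc_self

lemma abs_integral_sub_integral_le_tvDist {g : α → ℝ} (hg : Measurable g) {c d : ℝ}
    (hμ : ∀ᵐ x ∂μ, g x ∈ Icc c d) (hν : ∀ᵐ x ∂ν, g x ∈ Icc c d) :
    |∫ x, g x ∂μ - ∫ x, g x ∂ν| ≤ (d - c) * tvDist μ ν := by
  obtain ⟨x₀, hx₀⟩ := hμ.exists
  rw [integral_eq_setIntegral_measureReal_add hg hμ, integral_eq_setIntegral_measureReal_add hg hν,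
    add_sub_add_right_eq_sub, ← integral_sub (integrableOn_measureReal_le μ _ _ _)
    (integrableOn_measureReal_le ν _ _ _), ← Real.norm_eq_abs]
  calc _ ≤ tvDist μ ν * volume.real (Ioc 0 (d - c)) :=
        norm_setIntegral_le_of_norm_le_const measure_Ioc_lt_top fun t _ =>
          abs_measureReal_sub_le_tvDist ((hg.sub_const c) measurableSet_Ici)
    _ = (d - c) * tvDist μ ν := by simp [hx₀.1.trans hx₀.2, mul_comm]

end TotalVariation

lemma ite_mul_sub_mem_Icc (p : Prop) [Decidable p] {a b x y : ℝ} (hx : x ∈ Icc a b)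
    (hy : y ∈ Icc a b) : (if p then 1 else -1) * (y - x) ∈ Icc (a - b) (b - a) := by
  split_ifs <;> constructor <;> linarith [hx.1, hx.2, hy.1, hy.2]

section Regression

variable {𝒴 : Type*} [MeasurableSpace 𝒴] {μ ν : Measure (ℝ × 𝒴)} {a b : ℝ} {φ ψ : 𝒴 → ℝ}

def IsRegressionFunction (μ : Measure (ℝ × 𝒴)) (φ : 𝒴 → ℝ) : Prop :=
  ∀ B, MeasurableSet B → ∫ z in Prod.snd ⁻¹' B, φ z.2 ∂μ = ∫ z in Prod.snd ⁻¹' B, z.1 ∂μ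

lemma IsRegressionFunction.integral_sign_mul_eq_zero (hφ : IsRegressionFunction μ φ)
    (hφint : Integrable (fun z => φ z.2) μ) (hfst : Integrable Prod.fst μ) {A : Set 𝒴}
    [DecidablePred (· ∈ A)] (hA : MeasurableSet A) :
    ∫ z, (if z.2 ∈ A then 1 else -1) * (φ z.2 - z.1) ∂μ = 0 := by
  have hS : MeasurableSet (Prod.snd ⁻¹' A : Set (ℝ × 𝒴)) := measurable_snd hA
  have hint : Integrable (fun z : ℝ × 𝒴 => (if z.2 ∈ A then 1 else -1) * (φ z.2 - z.1)) μ := by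
    refine (hφint.sub hfst).bdd_mul (c := 1)
      (Measurable.ite hS measurable_const measurable_const).aestronglyMeasurable
      (.of_forall fun z => ?_)
    split_ifs <;> simp
  rw [← integral_add_compl hS hint,
    setIntegral_congr_fun hS (g := fun z => φ z.2 - z.1) fun z hz => by simp [show z.2 ∈ A from hz],
    setIntegral_congr_fun hS.compl (g := fun z => -(φ z.2 - z.1)) fun z hz => by
      simp [show z.2 ∉ A from hz],
    integral_neg, integral_sub hφint.integrableOn hfst.integrableOn,
    integral_sub hφint.integrableOn hfst.integrableOn, ← preimage_compl, hφ A hA, hφ Aᶜ hA.compl]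
  simp

variable [IsProbabilityMeasure μ] [IsProbabilityMeasure ν]

lemma integral_abs_sub_le_tvDist_of_isRegressionFunction
    (hμ : ∀ᵐ z ∂μ, z.1 ∈ Icc a b) (hν : ∀ᵐ z ∂ν, z.1 ∈ Icc a b)
    (hφ : Measurable φ) (hφab : ∀ y, φ y ∈ Icc a b) (hψ : Measurable ψ)
    (hψab : ∀ y, ψ y ∈ Icc a b) (hφμ : IsRegressionFunction μ φ)
    (hψν : IsRegressionFunction ν ψ) :
    ∫ z, |φ z.2 - ψ z.2| ∂ν ≤ 2 * (b - a) * tvDist μ ν := by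
  set A : Set 𝒴 := {y | ψ y ≤ φ y}
  have hA : MeasurableSet A := measurableSet_le hψ hφ
  set s : ℝ × 𝒴 → ℝ := fun z => if z.2 ∈ A then 1 else -1
  have hs : Measurable s := Measurable.ite (measurable_snd hA) measurable_const measurable_const
  have hsign : ∀ z, |φ z.2 - ψ z.2| = s z * (φ z.2 - z.1) - s z * (ψ z.2 - z.1) := by
    intro z
    by_cases hz : ψ z.2 ≤ φ z.2
    · simp [s, A, hz, abs_of_nonneg (sub_nonneg.2 hz)]
    · simp [s, A, hz, abs_of_neg (sub_neg.2 (not_le.1 hz))]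
  have hbound : ∀ (κ : Measure (ℝ × 𝒴)) (χ : 𝒴 → ℝ), (∀ y, χ y ∈ Icc a b) →
      (∀ᵐ z ∂κ, z.1 ∈ Icc a b) → ∀ᵐ z ∂κ, s z * (χ z.2 - z.1) ∈ Icc (a - b) (b - a) := by
    intro κ χ hχ hκ
    filter_upwards [hκ] with z hz using ite_mul_sub_mem_Icc _ hz (hχ z.2)
  have hmeas : ∀ χ : 𝒴 → ℝ, Measurable χ → Measurable fun z : ℝ × 𝒴 => s z * (χ z.2 - z.1) :=
    fun χ hχ => hs.mul ((hχ.comp measurable_snd).sub measurable_fst)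
  have hint : ∀ χ : 𝒴 → ℝ, Measurable χ → (∀ y, χ y ∈ Icc a b) →
      Integrable (fun z => s z * (χ z.2 - z.1)) ν := fun χ hχ hχab =>
    .of_mem_Icc _ _ (hmeas χ hχ).aemeasurable (hbound ν χ hχab hν)
  have hzero : ∀ (κ : Measure (ℝ × 𝒴)) [IsProbabilityMeasure κ] (χ : 𝒴 → ℝ), Measurable χ →
      (∀ y, χ y ∈ Icc a b) → (∀ᵐ z ∂κ, z.1 ∈ Icc a b) → IsRegressionFunction κ χ →
      ∫ z, s z * (χ z.2 - z.1) ∂κ = 0 := fun κ _ χ hχ hχab hκ hreg =>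
    hreg.integral_sign_mul_eq_zero
      (.of_mem_Icc a b (hχ.comp measurable_snd).aemeasurable (.of_forall fun z => hχab z.2))
      (.of_mem_Icc a b measurable_fst.aemeasurable hκ) hA
  calc ∫ z, |φ z.2 - ψ z.2| ∂ν
      = ∫ z, s z * (φ z.2 - z.1) ∂ν - ∫ z, s z * (ψ z.2 - z.1) ∂ν := by
        simp_rw [hsign]
        exact integral_sub (hint φ hφ hφab) (hint ψ hψ hψab)
    _ = -(∫ z, s z * (φ z.2 - z.1) ∂μ - ∫ z, s z * (φ z.2 - z.1) ∂ν) := by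
        rw [hzero ν ψ hψ hψab hν hψν, hzero μ φ hφ hφab hμ hφμ]; ring
    _ ≤ ((b - a) - (a - b)) * tvDist μ ν :=
        (neg_le_abs _).trans <| abs_integral_sub_integral_le_tvDist (hmeas φ hφ)
          (hbound μ φ hφab hμ) (hbound ν φ hφab hν)
    _ = 2 * (b - a) * tvDist μ ν := by ring

lemma abs_integral_comp_sub_le_tvDist_of_isRegressionFunction
    (hμ : ∀ᵐ z ∂μ, z.1 ∈ Icc a b) (hν : ∀ᵐ z ∂ν, z.1 ∈ Icc a b)
    (hφ : Measurable φ) (hφab : ∀ y, φ y ∈ Icc a b) (hψ : Measurable ψ)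
    (hψab : ∀ y, ψ y ∈ Icc a b) (hφμ : IsRegressionFunction μ φ)
    (hψν : IsRegressionFunction ν ψ) {h : ℝ → ℝ} (hh : LipschitzWith 1 h) :
    |∫ z, h (φ z.2) ∂μ - ∫ z, h (ψ z.2) ∂ν| ≤ 3 * (b - a) * tvDist μ ν := by
  have hdist : ∀ x y, |h x - h y| ≤ |x - y| := fun x y => by
    simpa [Real.dist_eq] using hh.dist_le_mul x y
  have hrange : ∀ {χ : 𝒴 → ℝ}, (∀ y, χ y ∈ Icc a b) → ∀ y,
      h (χ y) ∈ Icc (h ((a + b) / 2) - (b - a) / 2) (h ((a + b) / 2) + (b - a) / 2) := by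
    intro χ hχ y
    have hmid : |χ y - (a + b) / 2| ≤ (b - a) / 2 := by
      rw [abs_le]; constructor <;> linarith [(hχ y).1, (hχ y).2]
    have := (hdist (χ y) ((a + b) / 2)).trans hmid
    rw [abs_le] at this; constructor <;> linarith [this.1, this.2]
  have hm := hh.continuous.measurable
  have hint : ∀ {χ : 𝒴 → ℝ}, Measurable χ → (∀ y, χ y ∈ Icc a b) →
      Integrable (fun z : ℝ × 𝒴 => h (χ z.2)) ν := fun hχ hχab =>
    .of_mem_Icc _ _ (hm.comp (hχ.comp measurable_snd)).aemeasurable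
      (.of_forall fun z => hrange hχab z.2)
  have hlaw : |∫ z, h (φ z.2) ∂μ - ∫ z, h (φ z.2) ∂ν| ≤ (b - a) * tvDist μ ν := by
    refine (abs_integral_sub_integral_le_tvDist (g := fun z : ℝ × 𝒴 => h (φ z.2))
      (hm.comp (hφ.comp measurable_snd)) (.of_forall fun z => hrange hφab z.2)
      (.of_forall fun z => hrange hφab z.2)).trans_eq ?_
    ring
  have hcond : |∫ z, h (φ z.2) ∂ν - ∫ z, h (ψ z.2) ∂ν| ≤ 2 * (b - a) * tvDist μ ν := by
    rw [← integral_sub (hint hφ hφab) (hint hψ hψab)]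
    refine (abs_integral_le_integral_abs).trans <| (integral_mono ?_ ?_ fun z => hdist _ _).trans
      (integral_abs_sub_le_tvDist_of_isRegressionFunction hμ hν hφ hφab hψ hψab hφμ hψν)
    · exact ((hint hφ hφab).sub (hint hψ hψab)).abs
    · refine .of_bound (((hφ.comp measurable_snd).sub (hψ.comp measurable_snd)).abs
        |>.aestronglyMeasurable) (b - a) (.of_forall fun z => ?_)
      simpa [Real.dist_eq] using Real.dist_le_of_mem_Icc (hφab z.2) (hψab z.2)
  calc _ ≤ |∫ z, h (φ z.2) ∂μ - ∫ z, h (φ z.2) ∂ν| + |∫ z, h (φ z.2) ∂ν - ∫ z, h (ψ z.2) ∂ν| :=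
        abs_sub_le _ _ _
    _ ≤ 3 * (b - a) * tvDist μ ν := by linarith

end Regression

section CondExp

variable {Ω 𝒴 : Type*} [mΩ : MeasurableSpace Ω] [m𝒴 : MeasurableSpace 𝒴] {ℙ : Measure Ω}
  {X : Ω → ℝ} {U : Ω → 𝒴} {a b : ℝ}

lemma ae_condExp_mem_Icc [IsFiniteMeasure ℙ] {m : MeasurableSpace Ω} (hm : m ≤ mΩ)
    (hX : Integrable X ℙ) (hXab : ∀ᵐ ω ∂ℙ, X ω ∈ Icc a b) : ∀ᵐ ω ∂ℙ, ℙ[X | m] ω ∈ Icc a b := by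
  have hle := condExp_mono (m := m) (integrable_const a) hX (hXab.mono fun _ h => h.1)
  have hge := condExp_mono (m := m) hX (integrable_const b) (hXab.mono fun _ h => h.2)
  rw [condExp_const hm] at hle hge
  filter_upwards [hle, hge] with ω using And.intro

/-- The clamping to `[a, b]` everywhere, not only on the range of `U`, matters: `φ` is later
integrated against the law of `(X, V)`. -/
lemma exists_measurable_mem_Icc_comp_ae_eq_condExp [IsFiniteMeasure ℙ] (hab : a ≤ b)
    (hU : Measurable U) (hX : Integrable X ℙ) (hXab : ∀ᵐ ω ∂ℙ, X ω ∈ Icc a b) :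
    ∃ φ : 𝒴 → ℝ, Measurable φ ∧ (∀ y, φ y ∈ Icc a b) ∧
      (fun ω => φ (U ω)) =ᵐ[ℙ] ℙ[X | m𝒴.comap U] := by
  obtain ⟨g, hg, hgU⟩ :=
    (stronglyMeasurable_condExp (μ := ℙ) (f := X) (m := m𝒴.comap U)).exists_eq_measurable_comp
  refine ⟨fun y => projIcc a b hab (g y),
    (continuous_subtype_val.comp continuous_projIcc).measurable.comp hg.measurable,
    fun y => (projIcc a b hab (g y)).2, ?_⟩
  filter_upwards [ae_condExp_mem_Icc hU.comap_le hX hXab] with ω hω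
  rw [hgU] at hω ⊢
  exact congrArg Subtype.val (projIcc_of_mem hab hω)

lemma isRegressionFunction_map [IsFiniteMeasure ℙ] (hX : Measurable X) (hXint : Integrable X ℙ)
    (hU : Measurable U) {φ : 𝒴 → ℝ} (hφ : Measurable φ)
    (hφU : (fun ω => φ (U ω)) =ᵐ[ℙ] ℙ[X | m𝒴.comap U]) :
    IsRegressionFunction (ℙ.map fun ω => (X ω, U ω)) φ := by
  intro B hB
  rw [setIntegral_map (f := fun z : ℝ × 𝒴 => φ z.2) (measurable_snd hB)
      (hφ.comp measurable_snd).aestronglyMeasurable (hX.prodMk hU).aemeasurable,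
    setIntegral_map (measurable_snd hB) measurable_fst.aestronglyMeasurable
      (hX.prodMk hU).aemeasurable]
  change ∫ ω in U ⁻¹' B, φ (U ω) ∂ℙ = ∫ ω in U ⁻¹' B, X ω ∂ℙ
  rw [setIntegral_congr_ae (hU hB) (hφU.mono fun ω h _ => h)]
  exact setIntegral_condExp hU.comap_le hXint ⟨B, hB, rfl⟩

lemma integral_comp_condExp_eq_integral_map (hX : Measurable X) (hU : Measurable U)
    {φ : 𝒴 → ℝ} (hφ : Measurable φ) (hφU : (fun ω => φ (U ω)) =ᵐ[ℙ] ℙ[X | m𝒴.comap U])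
    {h : ℝ → ℝ} (hh : Measurable h) :
    ∫ ω, h (ℙ[X | m𝒴.comap U] ω) ∂ℙ = ∫ z, h (φ z.2) ∂(ℙ.map fun ω => (X ω, U ω)) := by
  rw [integral_map (f := fun z : ℝ × 𝒴 => h (φ z.2)) (hX.prodMk hU).aemeasurable
    (hh.comp (hφ.comp measurable_snd)).aestronglyMeasurable]
  exact integral_congr_ae (hφU.symm.fun_comp h)

end CondExp

theorem stmt14_general
    {Ω 𝒴 : Type*} [MeasurableSpace Ω] [m𝒴 : MeasurableSpace 𝒴]
    (ℙ : Measure Ω) [IsProbabilityMeasure ℙ]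
    (a b : ℝ) (hab : a ≤ b)
    (X : Ω → ℝ) (hX : Measurable X) (hXab : ∀ ω, X ω ∈ Set.Icc a b)
    (U V : Ω → 𝒴) (hU : Measurable U) (hV : Measurable V)
    (ε : ℝ)
    (htv : tvDist (Measure.map (fun ω => (X ω, U ω)) ℙ)
                  (Measure.map (fun ω => (X ω, V ω)) ℙ) ≤ ε)
    (h : ℝ → ℝ) (hLip : LipschitzWith 1 h) :
    |(∫ ω, h ((ℙ[X | MeasurableSpace.comap U m𝒴]) ω) ∂ℙ)
        - ∫ ω, h ((ℙ[X | MeasurableSpace.comap V m𝒴]) ω) ∂ℙ|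
      ≤ 3 * (b - a) * ε := by
  have hXint : Integrable X ℙ := .of_mem_Icc a b hX.aemeasurable (.of_forall hXab)
  have hlaw : ∀ W : Ω → 𝒴, Measurable W →
      ∀ᵐ z ∂(ℙ.map fun ω => (X ω, W ω)), z.1 ∈ Icc a b := fun W hW =>
    (ae_map_iff (hX.prodMk hW).aemeasurable (measurable_fst measurableSet_Icc)).2
      (.of_forall hXab)
  have := Measure.isProbabilityMeasure_map (μ := ℙ) (hX.prodMk hU).aemeasurable
  have := Measure.isProbabilityMeasure_map (μ := ℙ) (hX.prodMk hV).aemeasurable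
  obtain ⟨φ, hφ, hφab, hφU⟩ :=
    exists_measurable_mem_Icc_comp_ae_eq_condExp hab hU hXint (.of_forall hXab)
  obtain ⟨ψ, hψ, hψab, hψV⟩ :=
    exists_measurable_mem_Icc_comp_ae_eq_condExp hab hV hXint (.of_forall hXab)
  rw [integral_comp_condExp_eq_integral_map hX hU hφ hφU hLip.continuous.measurable,
    integral_comp_condExp_eq_integral_map hX hV hψ hψV hLip.continuous.measurable]
  calc _ ≤ 3 * (b - a) * tvDist (ℙ.map fun ω => (X ω, U ω)) (ℙ.map fun ω => (X ω, V ω)) :=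
        abs_integral_comp_sub_le_tvDist_of_isRegressionFunction (hlaw U hU) (hlaw V hV) hφ hφab
          hψ hψab (isRegressionFunction_map hX hXint hU hφ hφU)
          (isRegressionFunction_map hX hXint hV hψ hψV) hLip
    _ ≤ 3 * (b - a) * ε := by gcongr

/-- for a real random variable `X` with values in `[a,b]` and random
elements `U, V` of a common measurable space, if `d_TV(law(X,U), law(X,V)) ≤ ε`,
then for every 1-Lipschitz `h : ℝ → ℝ`,
`|E[h(E[X|σ(U)])] − E[h(E[X|σ(V)])]| ≤ 3(b − a)ε`. -/
theorem stmt14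
    {Ω 𝒴 : Type*} [MeasurableSpace Ω] [m𝒴 : MeasurableSpace 𝒴]
    (ℙ : Measure Ω) [IsProbabilityMeasure ℙ]
    (a b : ℝ) (hab : a ≤ b)
    (X : Ω → ℝ) (hX : Measurable X) (hXab : ∀ ω, X ω ∈ Set.Icc a b)
    (U V : Ω → 𝒴) (hU : Measurable U) (hV : Measurable V)
    (ε : ℝ) (hε : 0 ≤ ε)
    (htv : tvDist (Measure.map (fun ω => (X ω, U ω)) ℙ)
                  (Measure.map (fun ω => (X ω, V ω)) ℙ) ≤ ε)
    (h : ℝ → ℝ) (hLip : LipschitzWith 1 h) :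
    |(∫ ω, h ((ℙ[X | MeasurableSpace.comap U m𝒴]) ω) ∂ℙ)
        - ∫ ω, h ((ℙ[X | MeasurableSpace.comap V m𝒴]) ω) ∂ℙ|
      ≤ 3 * (b - a) * ε :=
  stmt14_general (m𝒴 := m𝒴) ℙ a b hab X hX hXab U V hU hV ε htv h hLip
end
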